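/- Let t : {0,1}^* → {a,b} be a tree and N ∈ ℕ such that every node n ∈ {0,1}^* has a strict descendant n' with |n'| ≤ |n| + N and t(n') ≠ t(n). Then for μ-almost every branch b ∈ {0,1}^ℕ, infinitely many prefixes of b are labelled a by t and infinitely many prefixes of b are labelled b by t. -/

import Mathlib

open MeasureTheory

/-- The cylinder of a finite binary word `w`: the set of branches of the infinite
binary tree that visit the node `w`, i.e. have `w` as a prefix. -/
def cylinder (w : List Bool) : Set (ℕ → Bool) :=
  {b | ∀ i : Fin w.length, b i = w.get i}

/-- `μ` is the uniform probability measure on the space of branches of the infinite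
binary tree: the infinite product of fair-coin Bernoulli(1/2) measures. -/
def IsUniformBernoulli (μ : Measure (ℕ → Bool)) : Prop :=
  IsProbabilityMeasure μ ∧ ∀ w : List Bool, μ (cylinder w) = (2 : ENNReal)⁻¹ ^ w.length

/-- The length-`k` prefix of a branch `b`. -/
def branchPrefix (b : ℕ → Bool) (k : ℕ) : List Bool :=
  List.ofFn fun i : Fin k => b i

/-! The hypothesis says that from any node `w` a branch reaches, within `N` more levels, a
node labelled differently from `w`, and it does so with probability at least `2⁻¹ ^ N`
given that it visits `w`. Hence the label of the prefixes of a branch stays constant from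
level `m` up to level `m + r * N` with probability at most `(1 - 2⁻¹ ^ N) ^ r`, so almost
every branch changes label at arbitrarily deep levels. -/

open Set

lemma mem_cylinder_iff_get {w : List Bool} {b : ℕ → Bool} :
    b ∈ cylinder w ↔ ∀ i : Fin w.length, b i = w.get i :=
  Iff.rfl

lemma mem_cylinder_iff {w : List Bool} {b : ℕ → Bool} :
    b ∈ cylinder w ↔ branchPrefix b w.length = w := by
  simp [mem_cylinder_iff_get, branchPrefix, List.ext_get_iff, eq_comm, Fin.forall_iff]

lemma branchPrefix_eq_take {w : List Bool} {b : ℕ → Bool} (hb : b ∈ cylinder w) {j : ℕ}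
    (hj : j ≤ w.length) : branchPrefix b j = w.take j := by
  rw [← mem_cylinder_iff.1 hb]
  apply List.ext_getElem <;> simp [branchPrefix, hj]

lemma cylinder_nil : cylinder [] = univ := by
  ext b
  simp [mem_cylinder_iff_get]

lemma cylinder_subset_cylinder {u v : List Bool} (h : u <+: v) : cylinder v ⊆ cylinder u := by
  intro b hb
  rw [mem_cylinder_iff, branchPrefix_eq_take hb h.length_le]
  exact (List.prefix_iff_eq_take.1 h).symm

lemma cylinder_ofFn_eq_preimage {L : ℕ} (f : Fin L → Bool) :
    cylinder (List.ofFn f) = (fun (b : ℕ → Bool) (i : Fin L) => b i) ⁻¹' {f} := by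
  ext b
  simp [mem_cylinder_iff_get, funext_iff, Fin.forall_iff]

lemma measurableSet_cylinder (w : List Bool) : MeasurableSet (cylinder w) := by
  have : cylinder w = ⋂ i : Fin w.length, (fun b : ℕ → Bool => b i) ⁻¹' {w.get i} := by
    ext b; simp [mem_cylinder_iff_get]
  rw [this]
  exact .iInter fun i => measurable_pi_apply _ (measurableSet_singleton _)

lemma measure_eq_sum_cylinder_inter (μ : Measure (ℕ → Bool)) (A : Set (ℕ → Bool)) (L : ℕ) :
    μ A = ∑ f : Fin L → Bool, μ (cylinder (List.ofFn f) ∩ A) := by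
  set π : (ℕ → Bool) → Fin L → Bool := fun b i => b i
  have hπ : Measurable π := measurable_pi_lambda _ fun i => measurable_pi_apply _
  calc μ A = μ.restrict A (π ⁻¹' ↑(Finset.univ : Finset (Fin L → Bool))) := by simp
    _ = ∑ f, μ.restrict A (π ⁻¹' {f}) :=
        (sum_measure_preimage_singleton _ fun f _ => hπ (measurableSet_singleton f)).symm
    _ = ∑ f, μ (cylinder (List.ofFn f) ∩ A) := by
        simp_rw [cylinder_ofFn_eq_preimage, Measure.restrict_apply (hπ (measurableSet_singleton _))]
        rfl

def labelConstOn (t : List Bool → Bool) (m n : ℕ) : Set (ℕ → Bool) :=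
  {b | ∀ j ∈ Icc m n, t (branchPrefix b j) = t (branchPrefix b m)}

lemma labelConstOn_anti (t : List Bool → Bool) (m : ℕ) : Antitone (labelConstOn t m) :=
  fun _ _ hn _ hb j hj => hb j ⟨hj.1, hj.2.trans hn⟩

lemma Bool.infinite_setOf_eq_of_forall_exists_ne {g : ℕ → Bool}
    (hg : ∀ m, ∃ j ≥ m, g j ≠ g m) (β : Bool) : {k | g k = β}.Infinite := by
  refine Nat.frequently_atTop_iff_infinite.1 (Filter.frequently_atTop.2 fun m => ?_)
  obtain ⟨j, hjm, hj⟩ := hg m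
  by_cases hm : g m = β
  · exact ⟨m, le_rfl, hm⟩
  · exact ⟨j, hjm, by revert hj hm; cases g j <;> cases g m <;> cases β <;> decide⟩

section UniformBernoulli

variable {μ : Measure (ℕ → Bool)} (hμ : ∀ w, μ (cylinder w) = (2 : ENNReal)⁻¹ ^ w.length)
  {t : List Bool → Bool} {N : ℕ}
include hμ

lemma measure_cylinder_diff_le {w v : List Bool} (hwv : w <+: v)
    (hv : v.length ≤ w.length + N) :
    μ (cylinder w \ cylinder v) ≤ (1 - (2 : ENNReal)⁻¹ ^ N) * μ (cylinder w) := by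
  rw [measure_sdiff (cylinder_subset_cylinder hwv) (measurableSet_cylinder v).nullMeasurableSet
    (by simp [hμ]), hμ, hμ, ENNReal.sub_mul fun _ _ => by simp, one_mul, ← pow_add]
  exact tsub_le_tsub_left
    (pow_le_pow_of_le_one zero_le (ENNReal.inv_le_one.2 one_le_two) (by omega)) _

variable (h : ∀ n : List Bool, ∃ n' : List Bool,
  n <+: n' ∧ n' ≠ n ∧ n'.length ≤ n.length + N ∧ t n' ≠ t n)
include h

lemma measure_cylinder_inter_labelConstOn_add_le {m : ℕ} {w : List Bool} (hm : m ≤ w.length) :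
    μ (cylinder w ∩ labelConstOn t m (w.length + N))
      ≤ (1 - (2 : ENNReal)⁻¹ ^ N) * μ (cylinder w ∩ labelConstOn t m w.length) := by
  have hmono := inter_subset_inter_right (cylinder w)
    (labelConstOn_anti t m (Nat.le_add_right w.length N))
  rcases (cylinder w ∩ labelConstOn t m w.length).eq_empty_or_nonempty with hempty | ⟨b₀, hb₀⟩
  · simp [subset_empty_iff.1 (hempty ▸ hmono)]
  -- `labelConstOn t m w.length` only depends on the first `w.length` letters of a branch.
  have hw : cylinder w ⊆ labelConstOn t m w.length := fun b hb j hj => by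
    rw [branchPrefix_eq_take hb hj.2, branchPrefix_eq_take hb hm,
      ← branchPrefix_eq_take hb₀.1 hj.2, ← branchPrefix_eq_take hb₀.1 hm]
    exact hb₀.2 j hj
  obtain ⟨v, hwv, hvw, hv, htv⟩ := h w
  have hwv_lt : w.length < v.length :=
    hwv.length_le.lt_of_ne fun hl => hvw (hwv.eq_of_length hl).symm
  have hsub : cylinder w ∩ labelConstOn t m (w.length + N) ⊆ cylinder w \ cylinder v := by
    rintro b ⟨hbw, hb⟩
    refine ⟨hbw, fun hbv => htv ?_⟩
    rw [← mem_cylinder_iff.1 hbv, ← mem_cylinder_iff.1 hbw, hb _ ⟨by omega, hv⟩,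
      hb _ ⟨hm, by omega⟩]
  rw [inter_eq_left.2 hw]
  exact (measure_mono hsub).trans (measure_cylinder_diff_le hμ hwv hv)

lemma measure_labelConstOn_add_le {m n : ℕ} (hmn : m ≤ n) :
    μ (labelConstOn t m (n + N)) ≤ (1 - (2 : ENNReal)⁻¹ ^ N) * μ (labelConstOn t m n) := by
  rw [measure_eq_sum_cylinder_inter μ (labelConstOn t m (n + N)) n,
    measure_eq_sum_cylinder_inter μ (labelConstOn t m n) n, Finset.mul_sum]
  gcongr with f
  simpa using
    measure_cylinder_inter_labelConstOn_add_le hμ h (w := List.ofFn f) (by simpa using hmn)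

lemma measure_labelConstOn_le_pow (m r : ℕ) :
    μ (labelConstOn t m (m + r * N)) ≤ (1 - (2 : ENNReal)⁻¹ ^ N) ^ r := by
  induction r with
  | zero =>
    simpa [← cylinder_nil, hμ] using measure_mono (μ := μ) (subset_univ (labelConstOn t m m))
  | succ r ih =>
    calc μ (labelConstOn t m (m + (r + 1) * N))
        = μ (labelConstOn t m (m + r * N + N)) := by rw [add_mul, one_mul, add_assoc]
      _ ≤ (1 - (2 : ENNReal)⁻¹ ^ N) * μ (labelConstOn t m (m + r * N)) :=
          measure_labelConstOn_add_le hμ h (Nat.le_add_right m _)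
      _ ≤ (1 - (2 : ENNReal)⁻¹ ^ N) * (1 - (2 : ENNReal)⁻¹ ^ N) ^ r := by gcongr
      _ = (1 - (2 : ENNReal)⁻¹ ^ N) ^ (r + 1) := (pow_succ' _ _).symm

lemma measure_iInter_labelConstOn_eq_zero (m : ℕ) : μ (⋂ n, labelConstOn t m n) = 0 := by
  have hlt : 1 - (2 : ENNReal)⁻¹ ^ N < 1 :=
    ENNReal.sub_lt_self ENNReal.one_ne_top one_ne_zero (pow_ne_zero _ (by simp))
  refine le_antisymm (ge_of_tendsto' (ENNReal.tendsto_pow_atTop_nhds_zero_of_lt_one hlt)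
    fun r => ?_) zero_le
  exact (measure_mono (iInter_subset _ _)).trans (measure_labelConstOn_le_pow hμ h m r)

end UniformBernoulli

/-- If in the tree `t` (over the alphabet `{a, b}` encoded as `Bool`) every node
has a strict descendant at depth at most `N` deeper with a different label, then
almost every branch has infinitely many `a`-labelled and infinitely many
`b`-labelled prefixes. -/
theorem stmt_7 (μ : Measure (ℕ → Bool)) (hμ : IsUniformBernoulli μ)
    (t : List Bool → Bool) (N : ℕ)
    (h : ∀ n : List Bool, ∃ n' : List Bool,
      n <+: n' ∧ n' ≠ n ∧ n'.length ≤ n.length + N ∧ t n' ≠ t n) :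
    ∀ᵐ b ∂μ, {k : ℕ | t (branchPrefix b k) = true}.Infinite ∧
      {k : ℕ | t (branchPrefix b k) = false}.Infinite := by
  have hchange : ∀ᵐ b ∂μ, ∀ m, b ∉ ⋂ n, labelConstOn t m n :=
    ae_all_iff.2 fun m =>
      measure_eq_zero_iff_ae_notMem.1 (measure_iInter_labelConstOn_eq_zero hμ.2 h m)
  filter_upwards [hchange] with b hb
  have hne : ∀ m, ∃ j ≥ m, t (branchPrefix b j) ≠ t (branchPrefix b m) := fun m => by
    obtain ⟨-, j, hmj, -, hj⟩ :
        ∃ n j, m ≤ j ∧ j ≤ n ∧ t (branchPrefix b j) ≠ t (branchPrefix b m) := by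
      simpa [labelConstOn] using hb m
    exact ⟨j, hmj, hj⟩
  exact ⟨Bool.infinite_setOf_eq_of_forall_exists_ne hne true,
    Bool.infinite_setOf_eq_of_forall_exists_ne hne false⟩
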